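/- arXiv:2307.15489 — 5 statements merged into one kernel-verified Lean document; each statement's English description precedes it below -/
import Mathlib

section
/- Strong Fenchel duality for the discrete TV-ULoG problem (Proposition 1): Let ι and κ be nonempty finite index types, let A : (ι → ℝ) →ₗ[ℝ] (κ → EuclideanSpace ℝ (Fin 3)) be a linear map and Aᵀ its adjoint with respect to the standard inner products, and let l, u : ι → ℝ satisfy l i ≤ u i for all i. Then the infimum over w in the discrete tube [l, u] of ∑_{j ∈ κ} ‖(A w) j‖ equals the supremum over v ∈ S of the infimum over w ∈ [l, u] of ⟨Aᵀ v, w⟩, and both the outer infimum and the outer supremum are attained. -/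
open scoped InnerProductSpace
open Set

/-!
The primal value is attained since the box is compact. Weak duality is Cauchy–Schwarz,
`⟨v j, (A w) j⟩ ≤ ‖v j‖ ‖(A w) j‖`. For strong duality, separate the open convex sublevel set
`{y | ∑ j, ‖y j‖ < p}` from the convex image `A '' [l, u]`, where `p` is the primal value; the
separating functional, written as `y ↦ ∑ j, ⟨v j, y j⟩` and rescaled, has `‖v j‖ ≤ 1`
precisely because it stays below the separating level on the sublevel set.
-/

section SumNorm

variable {κ E : Type*} [Fintype κ] [NormedAddCommGroup E]

theorem convexOn_sum_norm [NormedSpace ℝ E] : ConvexOn ℝ univ fun y : κ → E => ∑ j, ‖y j‖ :=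
  ⟨convex_univ, fun x _ y _ a b ha hb hab => by
    simpa only [Finset.sum_add_distrib, Finset.mul_sum, Pi.add_apply, Pi.smul_apply,
      smul_eq_mul] using Finset.sum_le_sum fun j _ =>
        (convexOn_norm convex_univ).2 (mem_univ (x j)) (mem_univ (y j)) ha hb hab⟩

theorem sum_norm_single [DecidableEq κ] (j : κ) (x : E) :
    ∑ k, ‖(Pi.single j x : κ → E) k‖ = ‖x‖ := by
  simp [Pi.single_apply, apply_ite]

variable [InnerProductSpace ℝ E]

theorem sum_inner_le_sum_norm {v : κ → E} (hv : ∀ j, ‖v j‖ ≤ 1) (y : κ → E) :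
    ∑ j, ⟪v j, y j⟫_ℝ ≤ ∑ j, ‖y j‖ :=
  Finset.sum_le_sum fun j _ => (real_inner_le_norm _ _).trans <|
    mul_le_of_le_one_left (norm_nonneg _) (hv j)

theorem mul_norm_le_of_inner_lt {x : E} {p c : ℝ} (hp : 0 < p)
    (h : ∀ y : E, ‖y‖ < p → ⟪x, y⟫_ℝ < c) : p * ‖x‖ ≤ c := by
  have hc : 0 < c := by simpa using h 0 (by simpa using hp)
  rcases eq_or_ne x 0 with rfl | hx
  · simpa using hc.le
  by_contra! hlt
  have hxpos : 0 < ‖x‖ := norm_pos_iff.2 hx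
  set y := (c / ‖x‖ ^ 2) • x
  have hy : ‖y‖ < p := by
    rw [norm_smul, Real.norm_of_nonneg (by positivity), div_mul_eq_mul_div, pow_two,
      mul_div_mul_right _ _ hxpos.ne', div_lt_iff₀ hxpos]
    linarith
  have hxy : ⟪x, y⟫_ℝ = c := by
    rw [real_inner_smul_right, real_inner_self_eq_norm_sq]
    field_simp
  exact (h y hy).ne hxy

variable [CompleteSpace E]

theorem exists_forall_eq_sum_inner (f : StrongDual ℝ (κ → E)) :
    ∃ v : κ → E, ∀ y, f y = ∑ j, ⟪v j, y j⟫_ℝ := by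
  classical
  refine ⟨fun j => (InnerProductSpace.toDual ℝ E).symm
    (f.comp (ContinuousLinearMap.single ℝ (fun _ : κ => E) j)), fun y => ?_⟩
  conv_lhs => rw [← Finset.univ_sum_single y]
  simp [InnerProductSpace.toDual_symm_apply]

theorem exists_norm_le_one_forall_le_sum_inner {K : Set (κ → E)} (hK : Convex ℝ K) {p : ℝ}
    (hpK : ∀ y ∈ K, p ≤ ∑ j, ‖y j‖) :
    ∃ v : κ → E, (∀ j, ‖v j‖ ≤ 1) ∧ ∀ y ∈ K, p ≤ ∑ j, ⟪v j, y j⟫_ℝ := by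
  classical
  rcases le_or_gt p 0 with hp | hp
  · exact ⟨0, fun j => by simp, fun y _ => by simpa using hp⟩
  have hB : IsOpen {y : κ → E | ∑ j, ‖y j‖ < p} :=
    isOpen_lt (by fun_prop) continuous_const
  have hdisj : Disjoint {y : κ → E | ∑ j, ‖y j‖ < p} K :=
    disjoint_left.2 fun y hyB hyK => (hpK y hyK).not_gt hyB
  obtain ⟨f, c, hfB, hfK⟩ := geometric_hahn_banach_open
    (by simpa using (convexOn_sum_norm (κ := κ) (E := E)).convex_lt p) hB hK hdisj
  obtain ⟨v, hfv⟩ := exists_forall_eq_sum_inner f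
  have hc : 0 < c := by simpa using hfB 0 (by simpa using hp)
  have hpv : ∀ j, p * ‖v j‖ ≤ c := fun j => mul_norm_le_of_inner_lt hp fun x hx => by
    simpa [hfv, Pi.single_apply, apply_ite] using
      hfB (Pi.single j x) (by simpa only [mem_ofPred_eq, sum_norm_single] using hx)
  refine ⟨(p / c) • v, fun j => ?_, fun y hy => ?_⟩
  · rw [Pi.smul_apply, norm_smul, Real.norm_of_nonneg (by positivity), div_mul_eq_mul_div,
      div_le_one hc]
    exact hpv j
  · calc p = p / c * c := by field_simp
      _ ≤ p / c * f y := mul_le_mul_of_nonneg_left (hfK y hy) (by positivity)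
      _ = ∑ j, ⟪((p / c) • v) j, y j⟫_ℝ := by
        simp only [hfv, Finset.mul_sum, Pi.smul_apply, real_inner_smul_left]

end SumNorm

theorem tv_ulog_strong_fenchel_duality_general
    {ι κ : Type*} [Fintype ι] [Fintype κ]
    (A : (ι → ℝ) →ₗ[ℝ] (κ → EuclideanSpace ℝ (Fin 3)))
    (At : (κ → EuclideanSpace ℝ (Fin 3)) →ₗ[ℝ] (ι → ℝ))
    (hadj : ∀ (v : κ → EuclideanSpace ℝ (Fin 3)) (w : ι → ℝ),
      ∑ i, At v i * w i = ∑ j, (inner ℝ (v j) (A w j) : ℝ))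
    (l u : ι → ℝ) (hlu : ∀ i, l i ≤ u i) :
    ∃ p : ℝ,
      IsLeast ((fun w => ∑ j, ‖A w j‖) '' Set.Icc l u) p ∧
      IsGreatest
        ((fun v => sInf ((fun w => ∑ i, At v i * w i) '' Set.Icc l u)) ''
          {v : κ → EuclideanSpace ℝ (Fin 3) | ∀ j, ‖v j‖ ≤ 1}) p := by
  have hA : Continuous A := A.continuous_of_finiteDimensional
  obtain ⟨w₀, hw₀, hmin⟩ := isCompact_Icc.exists_isMinOn (nonempty_Icc.2 hlu)
    (show Continuous fun w => ∑ j, ‖A w j‖ by fun_prop).continuousOn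
  have hpK : ∀ y ∈ A '' Icc l u, ∑ j, ‖A w₀ j‖ ≤ ∑ j, ‖y j‖ :=
    forall_mem_image.2 fun w hw => hmin hw
  obtain ⟨v, hv, hvK⟩ := exists_norm_le_one_forall_le_sum_inner
    ((convex_Icc l u).linear_image A) hpK
  have hdual_le : ∀ v' : κ → EuclideanSpace ℝ (Fin 3), (∀ j, ‖v' j‖ ≤ 1) →
      ∑ i, At v' i * w₀ i ≤ ∑ j, ‖A w₀ j‖ := fun v' hv' =>
    (hadj v' w₀).trans_le (sum_inner_le_sum_norm hv' _)
  have hdual_ge : ∀ w ∈ Icc l u, ∑ j, ‖A w₀ j‖ ≤ ∑ i, At v i * w i := fun w hw => by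
    rw [hadj]
    exact hvK _ (mem_image_of_mem A hw)
  refine ⟨_, ⟨mem_image_of_mem _ hw₀, forall_mem_image.2 fun w hw => hmin hw⟩,
    ⟨v, hv, IsLeast.csInf_eq ⟨⟨w₀, hw₀, (hdual_le v hv).antisymm (hdual_ge w₀ hw₀)⟩,
      forall_mem_image.2 hdual_ge⟩⟩, forall_mem_image.2 fun v' hv' => ?_⟩
  have hbdd : BddBelow ((fun w => ∑ i, At v' i * w i) '' Icc l u) :=
    (isCompact_Icc.image (by fun_prop)).bddBelow
  exact (csInf_le hbdd (mem_image_of_mem _ hw₀)).trans (hdual_le v' hv')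

/-- **Strong Fenchel duality for the discrete TV-ULoG problem** (Proposition 1).
The infimum over `w` in the discrete tube `[l, u]` of `∑ j, ‖(A w) j‖` equals the
supremum over `v ∈ S` of the infimum over `w ∈ [l, u]` of `⟨Aᵀ v, w⟩`, and both the
outer infimum and the outer supremum are attained. -/
theorem tv_ulog_strong_fenchel_duality
    {ι κ : Type*} [Fintype ι] [Fintype κ] [Nonempty ι] [Nonempty κ]
    (A : (ι → ℝ) →ₗ[ℝ] (κ → EuclideanSpace ℝ (Fin 3)))
    (At : (κ → EuclideanSpace ℝ (Fin 3)) →ₗ[ℝ] (ι → ℝ))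
    (hadj : ∀ (v : κ → EuclideanSpace ℝ (Fin 3)) (w : ι → ℝ),
      ∑ i, At v i * w i = ∑ j, (inner ℝ (v j) (A w j) : ℝ))
    (l u : ι → ℝ) (hlu : ∀ i, l i ≤ u i) :
    ∃ p : ℝ,
      IsLeast ((fun w => ∑ j, ‖A w j‖) '' Set.Icc l u) p ∧
      IsGreatest
        ((fun v => sInf ((fun w => ∑ i, At v i * w i) '' Set.Icc l u)) ''
          {v : κ → EuclideanSpace ℝ (Fin 3) | ∀ j, ‖v j‖ ≤ 1}) p :=
  tv_ulog_strong_fenchel_duality_general A At hadj l u hlu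
end

section
/- Nesterov smoothing of the dual TV-ULoG problem (Proposition 2): Let ι, κ be nonempty finite index types, A : (ι → ℝ) →ₗ[ℝ] (κ → EuclideanSpace ℝ (Fin 3)) a linear map with adjoint Aᵀ, l, u : ι → ℝ with l i ≤ u i for all i, and μ > 0. Then for every v : κ → EuclideanSpace ℝ (Fin 3), the supremum over w in the discrete tube [l, u] of ⟨−Aᵀ v, w⟩ − (μ/2)‖w‖² is attained and equals (μ/2)·( ‖(1/μ)·Aᵀ v‖² − ‖(−(1/μ)·Aᵀ v) − P_{[l,u]}(−(1/μ)·Aᵀ v)‖² ), where P_{[l,u]} is the metric projection onto the tube. -/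
/-!
Completing the square, `⟨c, w⟩ - (μ/2)‖w‖² = (μ/2)(‖μ⁻¹c‖² - ‖μ⁻¹c - w‖²)`, turns the
maximization over the tube into the minimization of the distance from `μ⁻¹c = -(1/μ)·Aᵀv`
to the tube, which is solved by the metric projection `p`.
-/

theorem Finset.sum_mul_sub_half_mul_sum_sq_eq {ι : Type*} [Fintype ι] (c w : ι → ℝ) {μ : ℝ}
    (hμ : μ ≠ 0) :
    ∑ i, c i * w i - μ / 2 * ∑ i, w i ^ 2
      = μ / 2 * (∑ i, (μ⁻¹ * c i) ^ 2 - ∑ i, (μ⁻¹ * c i - w i) ^ 2) := by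
  rw [mul_sub, Finset.mul_sum, Finset.mul_sum, Finset.mul_sum,
    ← Finset.sum_sub_distrib, ← Finset.sum_sub_distrib]
  refine Finset.sum_congr rfl fun i _ => ?_
  field_simp
  ring

theorem IsMaxOn.isGreatest_image {α β : Type*} [Preorder β] {f : α → β} {s : Set α} {a : α}
    (hf : IsMaxOn f s a) (ha : a ∈ s) : IsGreatest (f '' s) (f a) :=
  ⟨Set.mem_image_of_mem f ha, Set.forall_mem_image.2 hf⟩

theorem tv_ulog_dual_nesterov_smoothing_general
    {ι κ : Type*} [Fintype ι]
    (At : (κ → EuclideanSpace ℝ (Fin 3)) →ₗ[ℝ] (ι → ℝ))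
    (l u : ι → ℝ)
    (μ : ℝ) (hμ : 0 < μ)
    (v : κ → EuclideanSpace ℝ (Fin 3))
    (p : ι → ℝ) (hpC : p ∈ Set.Icc l u)
    (hproj : ∀ w ∈ Set.Icc l u,
      ∑ i, ((-(1 / μ) • At v) i - p i) ^ 2 ≤ ∑ i, ((-(1 / μ) • At v) i - w i) ^ 2) :
    IsGreatest
      ((fun w => (∑ i, (-(At v)) i * w i) - μ / 2 * ∑ i, (w i) ^ 2) '' Set.Icc l u)
      (μ / 2 * ((∑ i, ((1 / μ) * At v i) ^ 2)
        - ∑ i, ((-(1 / μ) • At v) i - p i) ^ 2)) := by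
  set dist2 : (ι → ℝ) → ℝ := fun w => ∑ i, ((-(1 / μ) • At v) i - w i) ^ 2
  set K := ∑ i, ((1 / μ) * At v i) ^ 2
  have completed_square :
      (fun w => (∑ i, (-(At v)) i * w i) - μ / 2 * ∑ i, (w i) ^ 2)
        = fun w => μ / 2 * (K - dist2 w) := by
    funext w
    rw [Finset.sum_mul_sub_half_mul_sum_sq_eq _ w hμ.ne']
    simp [K, dist2, one_div]
  have hmin : IsMinOn dist2 (Set.Icc l u) p := hproj
  have hanti : Antitone fun t => μ / 2 * (K - t) := fun s t hst =>
    mul_le_mul_of_nonneg_left (sub_le_sub_left hst K) (by positivity)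
  rw [completed_square]
  exact (hmin.comp_antitone hanti).isGreatest_image hpC

/-- **Nesterov smoothing of the dual TV-ULoG problem** (Proposition 2).
For every `v`, the supremum over `w` in the discrete tube `[l, u]` of
`⟨−Aᵀ v, w⟩ − (μ/2)‖w‖²` is attained and equals
`(μ/2)·(‖(1/μ)·Aᵀ v‖² − ‖(−(1/μ)·Aᵀ v) − P_{[l,u]}(−(1/μ)·Aᵀ v)‖²)`,
where the metric projection `p = P_{[l,u]}(−(1/μ)·Aᵀ v)` is characterized by `p`
lying in the tube and minimizing the (squared) Euclidean distance to `−(1/μ)·Aᵀ v`.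
Euclidean inner products and norms on `ι → ℝ` are spelled out as sums. -/
theorem tv_ulog_dual_nesterov_smoothing
    {ι κ : Type*} [Fintype ι] [Fintype κ] [Nonempty ι] [Nonempty κ]
    (A : (ι → ℝ) →ₗ[ℝ] (κ → EuclideanSpace ℝ (Fin 3)))
    (At : (κ → EuclideanSpace ℝ (Fin 3)) →ₗ[ℝ] (ι → ℝ))
    (hadj : ∀ (v : κ → EuclideanSpace ℝ (Fin 3)) (w : ι → ℝ),
      ∑ i, At v i * w i = ∑ j, (inner ℝ (v j) (A w j) : ℝ))
    (l u : ι → ℝ) (hlu : ∀ i, l i ≤ u i)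
    (μ : ℝ) (hμ : 0 < μ)
    (v : κ → EuclideanSpace ℝ (Fin 3))
    (p : ι → ℝ) (hpC : p ∈ Set.Icc l u)
    (hproj : ∀ w ∈ Set.Icc l u,
      ∑ i, ((-(1 / μ) • At v) i - p i) ^ 2 ≤ ∑ i, ((-(1 / μ) • At v) i - w i) ^ 2) :
    IsGreatest
      ((fun w => (∑ i, (-(At v)) i * w i) - μ / 2 * ∑ i, (w i) ^ 2) '' Set.Icc l u)
      (μ / 2 * ((∑ i, ((1 / μ) * At v i) ^ 2)
        - ∑ i, ((-(1 / μ) • At v) i - p i) ^ 2)) :=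
  tv_ulog_dual_nesterov_smoothing_general At l u μ hμ v p hpC hproj
end

section
/- Nesterov smoothing of the primal TV-ULoG objective (Proposition 3): Let ι, κ be nonempty finite index types, A : (ι → ℝ) →ₗ[ℝ] (κ → EuclideanSpace ℝ (Fin 3)) a linear map, and μ > 0. Then for every x : ι → ℝ, the supremum over w ∈ S of ⟨w, A x⟩ − (μ/2)‖w‖² is attained and equals ∑_{j ∈ κ} h_μ((A x) j). -/
/-!
The objective separates over the coordinates `j`, and so does the constraint set, so the
supremum is the sum of the coordinatewise suprema of `⟪w, v⟫ - μ/2 ‖w‖²` over the unit ball.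
Since `⟪w, v⟫ - μ/2 ‖w‖² = ‖v‖²/(2μ) - μ/2 ‖w - v/μ‖²`, the maximiser over the ball is the
projection of `v/μ` onto it, namely `w = v / max μ ‖v‖`, and its value is the Huber function of `v`.
-/

open scoped BigOperators

/-- The Huber function `h_μ` on `EuclideanSpace ℝ (Fin 3)`. -/
noncomputable def huber (μ : ℝ) (v : EuclideanSpace ℝ (Fin 3)) : ℝ :=
  if μ ≤ ‖v‖ then ‖v‖ - μ / 2 else ‖v‖ ^ 2 / (2 * μ)

open Metric

theorem IsGreatest.sum_image_pi {κ M : Type*} [Fintype κ] [AddCommMonoid M] [PartialOrder M]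
    [IsOrderedAddMonoid M] {α : κ → Type*} {s : ∀ j, Set (α j)} {f : ∀ j, α j → M}
    {m : κ → M} (h : ∀ j, IsGreatest (f j '' s j) (m j)) :
    IsGreatest ((fun w => ∑ j, f j (w j)) '' Set.univ.pi s) (∑ j, m j) := by
  choose w hws hwm using fun j => (h j).1
  refine ⟨⟨w, fun j _ => hws j, Finset.sum_congr rfl fun j _ => hwm j⟩, ?_⟩
  rintro _ ⟨v, hv, rfl⟩
  exact Finset.sum_le_sum fun j _ => (h j).2 ⟨v j, hv j trivial, rfl⟩

section InnerProductSpace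

variable {E : Type*} [NormedAddCommGroup E] [InnerProductSpace ℝ E] {μ : ℝ}

theorem inner_sub_half_mul_norm_sq_le (hμ : 0 < μ) (v : E) {w : E} (hw : ‖w‖ ≤ 1) :
    inner ℝ w v - μ / 2 * ‖w‖ ^ 2 ≤
      if μ ≤ ‖v‖ then ‖v‖ - μ / 2 else ‖v‖ ^ 2 / (2 * μ) := by
  have hcs : inner ℝ w v ≤ ‖w‖ * ‖v‖ := real_inner_le_norm w v
  have hw₀ : 0 ≤ ‖w‖ := norm_nonneg w
  split_ifs with h
  · nlinarith [mul_nonneg (sub_nonneg.2 hw)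
      (show 0 ≤ ‖v‖ - μ / 2 - μ * ‖w‖ / 2 by nlinarith)]
  · rw [le_div_iff₀ (by positivity)]
    nlinarith [sq_nonneg (‖v‖ - μ * ‖w‖)]

theorem inner_sub_half_mul_norm_sq_of_max_inv_smul (hμ : 0 < μ) (v : E) :
    inner ℝ ((max μ ‖v‖)⁻¹ • v) v - μ / 2 * ‖(max μ ‖v‖)⁻¹ • v‖ ^ 2 =
      if μ ≤ ‖v‖ then ‖v‖ - μ / 2 else ‖v‖ ^ 2 / (2 * μ) := by
  have hmax : 0 < max μ ‖v‖ := lt_max_of_lt_left hμ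
  rw [real_inner_smul_left, real_inner_self_eq_norm_sq, norm_smul, Real.norm_of_nonneg
    (inv_nonneg.2 hmax.le)]
  split_ifs with h
  · rw [max_eq_right h]
    have hv : 0 < ‖v‖ := hμ.trans_le h
    field_simp
  · rw [max_eq_left (le_of_not_ge h)]
    field_simp
    ring

theorem norm_max_inv_smul_le_one (hμ : 0 < μ) (v : E) : ‖(max μ ‖v‖)⁻¹ • v‖ ≤ 1 := by
  have hmax : 0 < max μ ‖v‖ := lt_max_of_lt_left hμ
  rw [norm_smul, Real.norm_of_nonneg (inv_nonneg.2 hmax.le), inv_mul_le_one₀ hmax]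
  exact le_max_right _ _

theorem isGreatest_inner_sub_half_mul_norm_sq_closedBall (hμ : 0 < μ) (v : E) :
    IsGreatest ((fun w => inner ℝ w v - μ / 2 * ‖w‖ ^ 2) '' closedBall 0 1)
      (if μ ≤ ‖v‖ then ‖v‖ - μ / 2 else ‖v‖ ^ 2 / (2 * μ)) := by
  refine ⟨⟨_, ?_, inner_sub_half_mul_norm_sq_of_max_inv_smul hμ v⟩, ?_⟩
  · simpa using norm_max_inv_smul_le_one hμ v
  · rintro _ ⟨w, hw, rfl⟩
    exact inner_sub_half_mul_norm_sq_le hμ v (by simpa using hw)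

end InnerProductSpace

theorem tv_ulog_primal_nesterov_smoothing_general
    {ι κ : Type*} [Fintype κ]
    (A : (ι → ℝ) →ₗ[ℝ] (κ → EuclideanSpace ℝ (Fin 3)))
    (μ : ℝ) (hμ : 0 < μ) (x : ι → ℝ) :
    IsGreatest
      ((fun w => (∑ j, (inner ℝ (w j) (A x j) : ℝ)) - μ / 2 * ∑ j, ‖w j‖ ^ 2) ''
        {v : κ → EuclideanSpace ℝ (Fin 3) | ∀ j, ‖v j‖ ≤ 1})
      (∑ j, huber μ (A x j)) := by
  have hS : {v : κ → EuclideanSpace ℝ (Fin 3) | ∀ j, ‖v j‖ ≤ 1} =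
      Set.univ.pi fun _ => closedBall 0 1 := by
    ext v
    simp
  have hobj : (fun w : κ → EuclideanSpace ℝ (Fin 3) =>
      (∑ j, (inner ℝ (w j) (A x j) : ℝ)) - μ / 2 * ∑ j, ‖w j‖ ^ 2) =
      fun w => ∑ j, (inner ℝ (w j) (A x j) - μ / 2 * ‖w j‖ ^ 2) := by
    ext w
    rw [Finset.mul_sum, Finset.sum_sub_distrib]
  rw [hS, hobj]
  exact IsGreatest.sum_image_pi fun j =>
    isGreatest_inner_sub_half_mul_norm_sq_closedBall hμ (A x j)

/-- **Nesterov smoothing of the primal TV-ULoG objective** (Proposition 3).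
For every `x : ι → ℝ`, the supremum over `w ∈ S` (the product of closed unit
balls) of `⟨w, A x⟩ − (μ/2)‖w‖²` is attained and equals `∑ j, h_μ((A x) j)`. -/
theorem tv_ulog_primal_nesterov_smoothing
    {ι κ : Type*} [Fintype ι] [Fintype κ] [Nonempty ι] [Nonempty κ]
    (A : (ι → ℝ) →ₗ[ℝ] (κ → EuclideanSpace ℝ (Fin 3)))
    (μ : ℝ) (hμ : 0 < μ) (x : ι → ℝ) :
    IsGreatest
      ((fun w => (∑ j, (inner ℝ (w j) (A x j) : ℝ)) - μ / 2 * ∑ j, ‖w j‖ ^ 2) ''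
        {v : κ → EuclideanSpace ℝ (Fin 3) | ∀ j, ‖v j‖ ≤ 1})
      (∑ j, huber μ (A x j)) :=
  tv_ulog_primal_nesterov_smoothing_general A μ hμ x
end

section
/- Strong duality between the quadratically regularized TV-ULoG problem and the smoothed dual (Remark 4): Let ι, κ be nonempty finite index types, A : (ι → ℝ) →ₗ[ℝ] (κ → EuclideanSpace ℝ (Fin 3)) a linear map with adjoint Aᵀ, l, u : ι → ℝ with l i ≤ u i for all i, and μ > 0. Then the minimum over x in the discrete tube [l, u] of ∑_{j ∈ κ} ‖(A x) j‖ + (μ/2)‖x‖² equals the maximum over v ∈ S of (μ/2)·( ‖(−(1/μ)·Aᵀ v) − P_{[l,u]}(−(1/μ)·Aᵀ v)‖² − ‖(1/μ)·Aᵀ v‖² ), and both extrema are attained. -/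
/-!
The Lagrangian `ℒ(x, v) = ∑ i, (Aᵀv)ᵢ xᵢ + (μ/2)‖x‖² = ∑ j, ⟪v j, (A x) j⟫ + (μ/2)‖x‖²` is
continuous, convex in `x` and affine in `v`, and the tube and `S` are compact and convex, so
Sion's minimax theorem gives a saddle point. Maximizing `ℒ(x, ·)` over `S` gives the primal
objective, since `‖w‖ = max_{‖v‖ ≤ 1} ⟪v, w⟫` blockwise. Completing the square,
`ℒ(x, v) = (μ/2)(‖x + Aᵀv/μ‖² - ‖Aᵀv/μ‖²)`, so minimizing `ℒ(·, v)` over the tube is attained at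
the projection of `-Aᵀv/μ` and gives the dual objective. The value at a saddle point is then both
the primal minimum and the dual maximum.
-/

open Set

theorem IsSaddlePointOn.isLeast_and_isGreatest {E F β : Type*} [PartialOrder β]
    {X : Set E} {Y : Set F} {f : E → F → β} {a : E} {b : F}
    (h : IsSaddlePointOn X Y f a b) (ha : a ∈ X) (hb : b ∈ Y)
    {φ : E → β} {ψ : F → β}
    (hφ : ∀ x ∈ X, IsGreatest (f x '' Y) (φ x)) (hψ : ∀ y ∈ Y, IsLeast ((f · y) '' X) (ψ y)) :
    IsLeast (φ '' X) (f a b) ∧ IsGreatest (ψ '' Y) (f a b) := by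
  have hφa : φ a = f a b := by
    obtain ⟨⟨y, hy, hya⟩, hub⟩ := hφ a ha
    exact le_antisymm (hya ▸ h a ha y hy) (hub ⟨b, hb, rfl⟩)
  have hψb : ψ b = f a b := by
    obtain ⟨⟨x, hx, hxb⟩, hlb⟩ := hψ b hb
    exact le_antisymm (hlb ⟨a, ha, rfl⟩) (hxb ▸ h x hx b hb)
  refine ⟨⟨⟨a, ha, hφa⟩, ?_⟩, ⟨⟨b, hb, hψb⟩, ?_⟩⟩
  · rintro _ ⟨x, hx, rfl⟩
    exact (h x hx b hb).trans ((hφ x hx).2 ⟨b, hb, rfl⟩)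
  · rintro _ ⟨y, hy, rfl⟩
    exact ((hψ y hy).2 ⟨a, ha, rfl⟩).trans (h a ha y hy)

theorem convexOn_univ_mul_add_sq (c : ℝ) {μ : ℝ} (hμ : 0 ≤ μ) :
    ConvexOn ℝ univ fun t : ℝ => c * t + μ / 2 * t ^ 2 :=
  ((LinearMap.mul ℝ ℝ c).convexOn convex_univ).add
    ((Even.convexOn_pow even_two).smul (by positivity : (0 : ℝ) ≤ μ / 2))

theorem isGreatest_sum_inner_image {κ G : Type*} [Fintype κ] [NormedAddCommGroup G]
    [InnerProductSpace ℝ G] (w : κ → G) :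
    IsGreatest ((fun v : κ → G => ∑ j, inner ℝ (v j) (w j)) '' {v | ∀ j, ‖v j‖ ≤ 1})
      (∑ j, ‖w j‖) := by
  refine ⟨⟨fun j => ‖w j‖⁻¹ • w j, fun j => ?_, Finset.sum_congr rfl fun j _ => ?_⟩, ?_⟩
  · rcases eq_or_ne (w j) 0 with h | h
    · simp [h]
    · exact (norm_smul_inv_norm h).le
  · rw [real_inner_smul_left, real_inner_self_eq_norm_sq, inv_mul_eq_div, sq, mul_self_div_self]
  · rintro _ ⟨v, hv, rfl⟩
    exact Finset.sum_le_sum fun j _ =>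
      (real_inner_le_norm _ _).trans (mul_le_of_le_one_left (norm_nonneg _) (hv j))

section

variable {ι : Type*} [Fintype ι]

theorem convexOn_univ_sum_apply {g : ι → ℝ → ℝ}
    (hg : ∀ i, ConvexOn ℝ univ (g i)) : ConvexOn ℝ univ fun x : ι → ℝ => ∑ i, g i (x i) := by
  refine ⟨convex_univ, fun x _ y _ a b ha hb hab => ?_⟩
  simp only [Pi.add_apply, Pi.smul_apply, smul_eq_mul, Finset.mul_sum, ← Finset.sum_add_distrib]
  exact Finset.sum_le_sum fun i _ => (hg i).2 trivial trivial ha hb hab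

theorem concaveOn_univ_sum_apply_mul_add {V : Type*} [AddCommGroup V] [Module ℝ V]
    (g : V →ₗ[ℝ] ι → ℝ) (x c : ι → ℝ) :
    ConcaveOn ℝ univ fun v => ∑ i, (g v i * x i + c i) := by
  have affine : (fun v => ∑ i, (g v i * x i + c i))
      = fun v => (Fintype.linearCombination ℝ x ∘ₗ g) v + ∑ i, c i := by
    funext v
    simp [Fintype.linearCombination_apply, Finset.sum_add_distrib, mul_comm]
  rw [affine]
  exact (LinearMap.concaveOn _ convex_univ).add_const _

theorem isLeast_sum_mul_add_sq_image {K : Set (ι → ℝ)} {P : (ι → ℝ) → ι → ℝ}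
    (hP : ∀ x, P x ∈ K ∧ ∀ w ∈ K, ∑ i, (x i - P x i) ^ 2 ≤ ∑ i, (x i - w i) ^ 2)
    (a : ι → ℝ) {μ : ℝ} (hμ : 0 < μ) :
    IsLeast ((fun x => ∑ i, (a i * x i + μ / 2 * x i ^ 2)) '' K)
      (μ / 2 * ((∑ i, ((-(1 / μ) • a) i - P (-(1 / μ) • a) i) ^ 2)
        - ∑ i, ((1 / μ) * a i) ^ 2)) := by
  set z := -(1 / μ) • a
  have complete_sq : ∀ x : ι → ℝ, ∑ i, (a i * x i + μ / 2 * x i ^ 2)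
      = μ / 2 * ((∑ i, (z i - x i) ^ 2) - ∑ i, ((1 / μ) * a i) ^ 2) := by
    intro x
    rw [mul_sub, Finset.mul_sum, Finset.mul_sum, ← Finset.sum_sub_distrib]
    refine Finset.sum_congr rfl fun i _ => ?_
    simp only [z, Pi.smul_apply, smul_eq_mul]
    field_simp
    ring
  refine ⟨⟨P z, (hP z).1, complete_sq _⟩, ?_⟩
  rintro _ ⟨w, hw, rfl⟩
  dsimp only
  rw [complete_sq]
  gcongr μ / 2 * (?_ - _)
  exact (hP z).2 w hw

theorem exists_isSaddlePointOn_sum_mul_add_sq {V : Type*} [NormedAddCommGroup V] [NormedSpace ℝ V]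
    [FiniteDimensional ℝ V] (g : V →ₗ[ℝ] ι → ℝ) {μ : ℝ} (hμ : 0 ≤ μ)
    {X : Set (ι → ℝ)} {Y : Set V} (hXne : X.Nonempty) (hXc : Convex ℝ X) (hXk : IsCompact X)
    (hYne : Y.Nonempty) (hYc : Convex ℝ Y) (hYk : IsCompact Y) :
    ∃ a ∈ X, ∃ b ∈ Y,
      IsSaddlePointOn X Y (fun x v => ∑ i, (g v i * x i + μ / 2 * x i ^ 2)) a b := by
  have hg : Continuous g := g.continuous_of_finiteDimensional
  refine Sion.exists_isSaddlePointOn hXne hXc hXk (fun v _ => ?_) (fun v _ => ?_) hYc hYne hYk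
    (fun x _ => ?_) (fun x _ => ?_)
  · exact (Continuous.lowerSemicontinuous (by fun_prop)).lowerSemicontinuousOn _
  · exact ((convexOn_univ_sum_apply fun i => convexOn_univ_mul_add_sq (g v i) hμ).subset
      (subset_univ _) hXc).quasiconvexOn
  · exact (Continuous.upperSemicontinuous (by fun_prop)).upperSemicontinuousOn _
  · exact ((concaveOn_univ_sum_apply_mul_add g x _).subset (subset_univ _) hYc).quasiconcaveOn

end

theorem tv_ulog_regularized_strong_duality_general
    {ι κ : Type*} [Fintype ι] [Fintype κ]
    (A : (ι → ℝ) →ₗ[ℝ] (κ → EuclideanSpace ℝ (Fin 3)))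
    (At : (κ → EuclideanSpace ℝ (Fin 3)) →ₗ[ℝ] (ι → ℝ))
    (hadj : ∀ (v : κ → EuclideanSpace ℝ (Fin 3)) (w : ι → ℝ),
      ∑ i, At v i * w i = ∑ j, (inner ℝ (v j) (A w j) : ℝ))
    (l u : ι → ℝ)
    (μ : ℝ) (hμ : 0 < μ)
    (P : (ι → ℝ) → (ι → ℝ))
    (hP : ∀ x : ι → ℝ, P x ∈ Set.Icc l u ∧
      ∀ w ∈ Set.Icc l u, ∑ i, (x i - P x i) ^ 2 ≤ ∑ i, (x i - w i) ^ 2) :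
    ∃ m : ℝ,
      IsLeast
        ((fun x => (∑ j, ‖A x j‖) + μ / 2 * ∑ i, (x i) ^ 2) '' Set.Icc l u) m ∧
      IsGreatest
        ((fun v => μ / 2 *
            ((∑ i, ((-(1 / μ) • At v) i - P (-(1 / μ) • At v) i) ^ 2)
              - ∑ i, ((1 / μ) * At v i) ^ 2)) ''
          {v : κ → EuclideanSpace ℝ (Fin 3) | ∀ j, ‖v j‖ ≤ 1}) m := by
  set S := {v : κ → EuclideanSpace ℝ (Fin 3) | ∀ j, ‖v j‖ ≤ 1}
  have hS : S = Metric.closedBall 0 1 := by ext v; simp [S, pi_norm_le_iff_of_nonneg]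
  obtain ⟨a, ha, b, hb, hab⟩ := exists_isSaddlePointOn_sum_mul_add_sq At hμ.le
    ⟨P 0, (hP 0).1⟩ (convex_Icc l u) isCompact_Icc
    ⟨0, by simp [S]⟩ (hS ▸ convex_closedBall 0 1) (hS ▸ isCompact_closedBall 0 1)
  refine ⟨_, hab.isLeast_and_isGreatest ha hb (fun x _ => ?_)
    (fun v _ => isLeast_sum_mul_add_sq_image hP (At v) hμ)⟩
  have primal_split : (fun v => ∑ i, (At v i * x i + μ / 2 * x i ^ 2))
      = (· + μ / 2 * ∑ i, x i ^ 2) ∘ fun v => ∑ j, inner ℝ (v j) (A x j) := by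
    ext v
    simp only [Function.comp, Finset.sum_add_distrib, ← Finset.mul_sum, hadj]
  rw [primal_split, image_comp]
  exact (monotone_id.add_const _).map_isGreatest (isGreatest_sum_inner_image (A x))

/-- **Strong duality between the quadratically regularized TV-ULoG problem and the
smoothed dual** (Remark 4): the minimum over `x` in the discrete tube `[l, u]` of
`∑ j, ‖(A x) j‖ + (μ/2)‖x‖²` equals the maximum over `v ∈ S` of
`(μ/2)·(‖(−(1/μ)·Aᵀ v) − P_{[l,u]}(−(1/μ)·Aᵀ v)‖² − ‖(1/μ)·Aᵀ v‖²)`,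
where `P` is the metric projection onto the tube (characterized by lying in the tube
and minimizing the squared Euclidean distance), and both extrema are attained. -/
theorem tv_ulog_regularized_strong_duality
    {ι κ : Type*} [Fintype ι] [Fintype κ] [Nonempty ι] [Nonempty κ]
    (A : (ι → ℝ) →ₗ[ℝ] (κ → EuclideanSpace ℝ (Fin 3)))
    (At : (κ → EuclideanSpace ℝ (Fin 3)) →ₗ[ℝ] (ι → ℝ))
    (hadj : ∀ (v : κ → EuclideanSpace ℝ (Fin 3)) (w : ι → ℝ),
      ∑ i, At v i * w i = ∑ j, (inner ℝ (v j) (A w j) : ℝ))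
    (l u : ι → ℝ) (hlu : ∀ i, l i ≤ u i)
    (μ : ℝ) (hμ : 0 < μ)
    (P : (ι → ℝ) → (ι → ℝ))
    (hP : ∀ x : ι → ℝ, P x ∈ Set.Icc l u ∧
      ∀ w ∈ Set.Icc l u, ∑ i, (x i - P x i) ^ 2 ≤ ∑ i, (x i - w i) ^ 2) :
    ∃ m : ℝ,
      IsLeast
        ((fun x => (∑ j, ‖A x j‖) + μ / 2 * ∑ i, (x i) ^ 2) '' Set.Icc l u) m ∧
      IsGreatest
        ((fun v => μ / 2 *
            ((∑ i, ((-(1 / μ) • At v) i - P (-(1 / μ) • At v) i) ^ 2)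
              - ∑ i, ((1 / μ) * At v i) ^ 2)) ''
          {v : κ → EuclideanSpace ℝ (Fin 3) | ∀ j, ‖v j‖ ≤ 1}) m :=
  tv_ulog_regularized_strong_duality_general A At hadj l u μ hμ P hP
end

section
/- The scale-normalized Laplacian of a Gaussian blob attains its strict global minimum exactly at the blob's center and size (Example 1): Fix m ∈ EuclideanSpace ℝ (Fin 2) and s > 0, and define u(x, t) = (2π(s + t))⁻¹ · exp(−‖x − m‖² / (2(s + t))) for t ≥ 0 and L(x, t) = t·Δu(x, t), where Δ is the spatial Laplacian. Then for all (x, t) ∈ ℝ² × (0, ∞), L(x, t) ≥ −1/(4πs), with equality if and only if x = m and t = s. -/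
open scoped BigOperators

/-- Spatial Laplacian of `f : ℝ² → ℝ` at `x`: the sum over `i` of the second
derivative at `0` of the one-dimensional slice `a ↦ f (x + a • eᵢ)`. -/
noncomputable def spatialLaplacian (f : EuclideanSpace ℝ (Fin 2) → ℝ)
    (x : EuclideanSpace ℝ (Fin 2)) : ℝ :=
  ∑ i : Fin 2,
    iteratedDeriv 2 (fun a : ℝ => f (x + a • EuclideanSpace.single i (1 : ℝ))) 0

/-!
With `σ = s + t` and `r = ‖x - m‖² / (2σ)`, differentiating the Gaussian along the coordinate
axes gives `t · Δu(x, t) = -(t / σ²) · (1 - r) e^{-r} / π`. Both factors are bounded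
independently: `(1 - r) e^{-r} ≤ 1` for `r ≥ 0`, strictly unless `r = 0`, because
`1 - r ≤ 1 + r ≤ e^r`; and `t / (s + t)² ≤ 1 / (4s)` by AM-GM, strictly unless `t = s`.
-/

open Real

lemma one_sub_mul_exp_neg_le_one {r : ℝ} (hr : 0 ≤ r) : (1 - r) * exp (-r) ≤ 1 := by
  rw [← le_div_iff₀ (exp_pos _), exp_neg, div_inv_eq_mul, one_mul]
  linarith [add_one_le_exp r]

lemma one_sub_mul_exp_neg_lt_one {r : ℝ} (hr : 0 < r) : (1 - r) * exp (-r) < 1 := by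
  rw [← lt_div_iff₀ (exp_pos _), exp_neg, div_inv_eq_mul, one_mul]
  linarith [add_one_le_exp r]

lemma div_add_sq_le_one_div_four_mul {s t : ℝ} (hs : 0 < s) (ht : 0 ≤ t) :
    t / (s + t) ^ 2 ≤ 1 / (4 * s) := by
  rw [div_le_div_iff₀ (by positivity) (by positivity)]
  linarith [four_mul_le_sq_add s t]

lemma div_add_sq_eq_one_div_four_mul_iff {s t : ℝ} (hs : 0 < s) (ht : 0 ≤ t) :
    t / (s + t) ^ 2 = 1 / (4 * s) ↔ t = s := by
  rw [div_eq_div_iff (by positivity) (by positivity)]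
  constructor
  · intro h
    have hst : (s - t) ^ 2 = 0 := by linarith
    rw [pow_eq_zero_iff two_ne_zero, sub_eq_zero] at hst
    exact hst.symm
  · rintro rfl
    ring

lemma div_add_sq_mul_one_sub_mul_exp_neg_le {s t r : ℝ} (hs : 0 < s) (ht : 0 ≤ t)
    (hr : 0 ≤ r) :
    t / (s + t) ^ 2 * ((1 - r) * exp (-r)) ≤ 1 / (4 * s) :=
  calc t / (s + t) ^ 2 * ((1 - r) * exp (-r))
      ≤ t / (s + t) ^ 2 := mul_le_of_le_one_right (by positivity) (one_sub_mul_exp_neg_le_one hr)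
    _ ≤ 1 / (4 * s) := div_add_sq_le_one_div_four_mul hs ht

lemma div_add_sq_mul_one_sub_mul_exp_neg_eq_iff {s t r : ℝ} (hs : 0 < s) (ht : 0 < t)
    (hr : 0 ≤ r) :
    t / (s + t) ^ 2 * ((1 - r) * exp (-r)) = 1 / (4 * s) ↔ r = 0 ∧ t = s := by
  have hw : 0 < t / (s + t) ^ 2 := by positivity
  constructor
  · intro h
    have hr0 : r = 0 := by
      by_contra hr0
      have := mul_lt_of_lt_one_right hw (one_sub_mul_exp_neg_lt_one (hr.lt_of_ne' hr0))
      linarith [div_add_sq_le_one_div_four_mul hs ht.le]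
    rw [hr0, sub_zero, neg_zero, exp_zero, mul_one, mul_one] at h
    exact ⟨hr0, (div_add_sq_eq_one_div_four_mul_iff hs ht.le).mp h⟩
  · rintro ⟨rfl, rfl⟩
    rw [sub_zero, neg_zero, exp_zero, mul_one, mul_one]
    exact (div_add_sq_eq_one_div_four_mul_iff hs ht.le).mpr rfl

lemma hasDerivAt_exp_quadratic (α β γ a : ℝ) :
    HasDerivAt (fun a => exp (α + β * a + γ * a ^ 2))
      (exp (α + β * a + γ * a ^ 2) * (β + 2 * γ * a)) a := by
  have hq : HasDerivAt (fun a => α + β * a + γ * a ^ 2) (β + 2 * γ * a) a :=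
    ((((hasDerivAt_id a).const_mul β).const_add α).add
      ((hasDerivAt_pow 2 a).const_mul γ)).congr_deriv (by simp; ring)
  exact hq.exp

lemma iteratedDeriv_two_exp_quadratic (α β γ : ℝ) :
    iteratedDeriv 2 (fun a => exp (α + β * a + γ * a ^ 2)) 0 = exp α * (β ^ 2 + 2 * γ) := by
  have hderiv : deriv (fun a => exp (α + β * a + γ * a ^ 2))
      = fun a => exp (α + β * a + γ * a ^ 2) * (β + 2 * γ * a) :=
    funext fun a => (hasDerivAt_exp_quadratic α β γ a).deriv
  have hlin : HasDerivAt (fun a : ℝ => β + 2 * γ * a) (2 * γ) 0 := by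
    simpa using ((hasDerivAt_id (0 : ℝ)).const_mul (2 * γ)).const_add β
  have hderiv2 : HasDerivAt (fun a => exp (α + β * a + γ * a ^ 2) * (β + 2 * γ * a))
      (exp α * β * β + exp α * (2 * γ)) 0 :=
    ((hasDerivAt_exp_quadratic α β γ 0).mul hlin).congr_deriv (by simp)
  rw [iteratedDeriv_succ, iteratedDeriv_one, hderiv, hderiv2.deriv]
  ring

lemma norm_add_smul_single_sq {ι : Type*} [Fintype ι] [DecidableEq ι] (v : EuclideanSpace ℝ ι)
    (i : ι) (a : ℝ) :
    ‖v + a • EuclideanSpace.single i (1 : ℝ)‖ ^ 2 = ‖v‖ ^ 2 + 2 * v i * a + a ^ 2 := by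
  rw [norm_add_sq_real, real_inner_smul_right, EuclideanSpace.inner_single_right, norm_smul,
    PiLp.norm_single]
  simp only [conj_trivial, norm_one, mul_one, norm_eq_abs, sq_abs]
  ring

lemma spatialLaplacian_gaussian (c : ℝ) (m : EuclideanSpace ℝ (Fin 2)) {σ : ℝ} (hσ : σ ≠ 0)
    (x : EuclideanSpace ℝ (Fin 2)) :
    spatialLaplacian (fun y => c * exp (-‖y - m‖ ^ 2 / (2 * σ))) x
      = c * exp (-‖x - m‖ ^ 2 / (2 * σ)) * ((‖x - m‖ ^ 2 - 2 * σ) / σ ^ 2) := by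
  have hslice : ∀ i : Fin 2,
      (fun a : ℝ => c * exp (-‖x + a • EuclideanSpace.single i (1 : ℝ) - m‖ ^ 2 / (2 * σ)))
        = fun a =>
          c * exp (-‖x - m‖ ^ 2 / (2 * σ) + (-(x - m) i / σ) * a + (-1 / (2 * σ)) * a ^ 2) := by
    intro i
    funext a
    rw [add_sub_right_comm, norm_add_smul_single_sq]
    congr 2
    field_simp
    ring
  simp only [spatialLaplacian, Fin.sum_univ_two, hslice, iteratedDeriv_const_mul_field,
    iteratedDeriv_two_exp_quadratic, EuclideanSpace.real_norm_sq_eq (x - m)]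
  field_simp
  ring

/-- **The scale-normalized Laplacian of a Gaussian blob attains its strict global
minimum exactly at the blob's center and size** (Example 1): with
`u(x, t) = (2π(s+t))⁻¹ exp(−‖x − m‖²/(2(s+t)))` for `t ≥ 0` and
`L(x, t) = t·Δu(x, t)`, one has `L(x, t) ≥ −1/(4πs)` for all `(x, t) ∈ ℝ² × (0, ∞)`,
with equality if and only if `x = m` and `t = s`. -/
theorem gaussian_blob_scale_normalized_laplacian_strict_min
    (m : EuclideanSpace ℝ (Fin 2)) (s : ℝ) (hs : 0 < s)
    (u : EuclideanSpace ℝ (Fin 2) × ℝ → ℝ)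
    (hu : ∀ (x : EuclideanSpace ℝ (Fin 2)) (t : ℝ), 0 ≤ t →
      u (x, t) = (2 * Real.pi * (s + t))⁻¹ * Real.exp (-‖x - m‖ ^ 2 / (2 * (s + t)))) :
    ∀ (x : EuclideanSpace ℝ (Fin 2)) (t : ℝ), 0 < t →
      -(1 / (4 * Real.pi * s)) ≤ t * spatialLaplacian (fun y => u (y, t)) x ∧
      (t * spatialLaplacian (fun y => u (y, t)) x = -(1 / (4 * Real.pi * s))
        ↔ x = m ∧ t = s) := by
  intro x t ht
  set r := ‖x - m‖ ^ 2 / (2 * (s + t)) with hr_def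
  have hr : 0 ≤ r := by positivity
  have hr_eq_zero : r = 0 ↔ x = m := by
    rw [hr_def, div_eq_zero_iff, pow_eq_zero_iff two_ne_zero, norm_eq_zero, sub_eq_zero,
      or_iff_left (by positivity)]
  have hL : t * spatialLaplacian (fun y => u (y, t)) x
      = -(t / (s + t) ^ 2 * ((1 - r) * exp (-r)) / π) := by
    rw [show (fun y => u (y, t)) = _ from funext fun y => hu y t ht.le,
      spatialLaplacian_gaussian _ m (by positivity), hr_def, neg_div]
    field_simp
    ring
  have hbound : 1 / (4 * π * s) = 1 / (4 * s) / π := by ring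
  rw [hL, neg_le_neg_iff, neg_inj, hbound, div_le_div_iff_of_pos_right pi_pos,
    div_left_inj' pi_ne_zero, div_add_sq_mul_one_sub_mul_exp_neg_eq_iff hs ht hr, hr_eq_zero]
  exact ⟨div_add_sq_mul_one_sub_mul_exp_neg_le hs ht.le hr, Iff.rfl⟩
end
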